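/- Let Ω be an uncountable algebraically closed field, t ∈ ℕ, and let X be an irreducible constructible subset of Ω^t. If {X_i : i ∈ I} is a countable family of closed subsets of X covering X, then X ⊆ X_i for some i ∈ I. -/

import Mathlib

open MvPolynomial

namespace Paper

/-! ### Zariski topologies on affine and projective spaces -/

/-- The Zariski topology on affine space `ι → k`, generated by the basic open sets
`{x | f x ≠ 0}` for multivariate polynomials `f`. -/
def zar (k : Type) [Field k] (ι : Type) : TopologicalSpace (ι → k) :=
  TopologicalSpace.generateFrom
    {U | ∃ f : MvPolynomial ι k, U = {x | MvPolynomial.eval x f ≠ 0}}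

/-- The Zariski topology on `n × n` matrices over `k`. -/
def mzar (k : Type) [Field k] (n : ℕ) : TopologicalSpace (Matrix (Fin n) (Fin n) k) :=
  TopologicalSpace.induced (fun A (p : Fin n × Fin n) => A p.1 p.2) (zar k (Fin n × Fin n))

/-- The Zariski topology on `N`-tuples of `n × n` matrices over `k`. -/
def mNzar (k : Type) [Field k] (n N : ℕ) :
    TopologicalSpace (Fin N → Matrix (Fin n) (Fin n) k) :=
  TopologicalSpace.induced (fun g (p : Fin N × Fin n × Fin n) => g p.1 p.2.1 p.2.2)
    (zar k (Fin N × Fin n × Fin n))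

/-- Projective space of dimension `m - 1` over `k`. -/
abbrev Pt (k : Type) [Field k] (m : ℕ) := Projectivization k (Fin m → k)

/-- The Zariski topology on projective space, coinduced from the Zariski topology on the
set of nonzero vectors of affine space. -/
def pzar (k : Type) [Field k] (m : ℕ) : TopologicalSpace (Pt k m) :=
  TopologicalSpace.coinduced (Projectivization.mk' k)
    (TopologicalSpace.induced (Subtype.val) (zar k (Fin m)))

/-- The Zariski topology on the product `Matₙ(k) × ℙ^(m-1)(k)` (not the product topology),
obtained from the Zariski topology on the affine cone. -/
def mpzar (k : Type) [Field k] (n m : ℕ) :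
    TopologicalSpace (Matrix (Fin n) (Fin n) k × Pt k m) :=
  TopologicalSpace.coinduced
    (fun x : Matrix (Fin n) (Fin n) k × {v : Fin m → k // v ≠ 0} =>
      (x.1, Projectivization.mk' k x.2))
    (TopologicalSpace.induced
      (fun x (p : (Fin n × Fin n) ⊕ Fin m) => Sum.elim (fun q => x.1 q.1 q.2) x.2.1 p)
      (zar k ((Fin n × Fin n) ⊕ Fin m)))

/-- The Zariski topology on the product `ℙ^(m-1)(k) × Matₙ(k)^N`, from the affine cone. -/
def pNzar (k : Type) [Field k] (m n N : ℕ) :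
    TopologicalSpace (Pt k m × (Fin N → Matrix (Fin n) (Fin n) k)) :=
  TopologicalSpace.coinduced
    (fun x : {v : Fin m → k // v ≠ 0} × (Fin N → Matrix (Fin n) (Fin n) k) =>
      (Projectivization.mk' k x.1, x.2))
    (TopologicalSpace.induced
      (fun x (p : Fin m ⊕ (Fin N × Fin n × Fin n)) =>
        Sum.elim x.1.1 (fun q => x.2 q.1 q.2.1 q.2.2) p)
      (zar k (Fin m ⊕ (Fin N × Fin n × Fin n))))

/-- The Zariski topology on `ℙ^(a-1)(k) × ℙ^(b-1)(k)`, from the affine cone. -/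
def ppzar (k : Type) [Field k] (a b : ℕ) : TopologicalSpace (Pt k a × Pt k b) :=
  TopologicalSpace.coinduced
    (fun x : {v : Fin a → k // v ≠ 0} × {w : Fin b → k // w ≠ 0} =>
      (Projectivization.mk' k x.1, Projectivization.mk' k x.2))
    (TopologicalSpace.induced
      (fun x (p : Fin a ⊕ Fin b) => Sum.elim x.1.1 x.2.1 p)
      (zar k (Fin a ⊕ Fin b)))

/-! ### Relative topological notions -/

/-- `A` is a closed subset of the subspace `S`. -/
def relClosed {α : Type} (t : TopologicalSpace α) (S A : Set α) : Prop :=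
  ∃ C, @IsClosed _ t C ∧ A = C ∩ S

/-- `A` is an open subset of the subspace `S`. -/
def relOpen {α : Type} (t : TopologicalSpace α) (S A : Set α) : Prop :=
  ∃ U, @IsOpen _ t U ∧ A = U ∩ S

/-- `A ⊆ S` is dense in the subspace `S`. -/
def relDense {α : Type} (t : TopologicalSpace α) (S A : Set α) : Prop :=
  S ⊆ @closure _ t A

/-- The dimension of a subset `A` of a topological space: the topological Krull dimension
of `A` with the subspace topology. -/
noncomputable def sdim {α : Type} (t : TopologicalSpace α) (A : Set α) : WithBot ℕ∞ :=
  @topologicalKrullDim A (TopologicalSpace.induced Subtype.val t)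

/-- `D` is an irreducible component of the subset `S`: an irreducible subset of `S` that is
maximal among irreducible subsets of `S`. -/
def IsIrrCompOf {α : Type} (t : TopologicalSpace α) (S D : Set α) : Prop :=
  D ⊆ S ∧ @IsIrreducible _ t D ∧ ∀ D', D ⊆ D' → D' ⊆ S → @IsIrreducible _ t D' → D' = D

/-! ### Linear algebraic groups as Zariski-closed subgroups of `GLₙ` -/

/-- `S` is a subgroup of invertible matrices. -/
def IsSubgroupSet (k : Type) [Field k] {n : ℕ} (S : Set (Matrix (Fin n) (Fin n) k)) : Prop :=
  (∀ A ∈ S, IsUnit A.det) ∧ 1 ∈ S ∧ (∀ A ∈ S, ∀ B ∈ S, A * B ∈ S) ∧ (∀ A ∈ S, A⁻¹ ∈ S)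

/-- A linear algebraic group over `k`: a Zariski-closed subgroup of some `GLₙ(k)`. -/
structure LAG (k : Type) [Field k] where
  n : ℕ
  carrier : Set (Matrix (Fin n) (Fin n) k)
  subgroup : IsSubgroupSet k carrier
  closed : relClosed (mzar k n) {A | IsUnit A.det} carrier

/-- A unipotent matrix. -/
def IsUnipotentM (k : Type) [Field k] {n : ℕ} (A : Matrix (Fin n) (Fin n) k) : Prop :=
  (A - 1) ^ n = 0

/-- `T` is normalised by `S`. -/
def NormalIn (k : Type) [Field k] {n : ℕ} (S T : Set (Matrix (Fin n) (Fin n) k)) : Prop :=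
  ∀ g ∈ S, ∀ A ∈ T, g * A * g⁻¹ ∈ T

/-- A (closed sub)group of matrices is reductive: its unipotent radical is trivial, i.e.
every closed connected normal unipotent subgroup is trivial. -/
def IsReductiveSet (k : Type) [Field k] {n : ℕ} (S : Set (Matrix (Fin n) (Fin n) k)) : Prop :=
  ∀ T, T ⊆ S → IsSubgroupSet k T → NormalIn k S T → relClosed (mzar k n) S T →
    @IsPreconnected _ (mzar k n) T → (∀ A ∈ T, IsUnipotentM k A) → T ⊆ {1}

/-- The unipotent radical of a matrix group `S`: the union (= the largest) of the closed
connected normal unipotent subgroups of `S`. -/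
def RuSet (k : Type) [Field k] {n : ℕ} (S : Set (Matrix (Fin n) (Fin n) k)) :
    Set (Matrix (Fin n) (Fin n) k) :=
  ⋃₀ {T | T ⊆ S ∧ IsSubgroupSet k T ∧ NormalIn k S T ∧ relClosed (mzar k n) S T ∧
      @IsPreconnected _ (mzar k n) T ∧ ∀ A ∈ T, IsUnipotentM k A}

/-- The identity component of a matrix group `S`. -/
def idComp (k : Type) [Field k] {n : ℕ} (S : Set (Matrix (Fin n) (Fin n) k)) :
    Set (Matrix (Fin n) (Fin n) k) :=
  ⋃₀ {T | T ⊆ S ∧ 1 ∈ T ∧ @IsPreconnected _ (mzar k n) T}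

/-- The closed subgroup of `G` topologically generated by a subset `S`. -/
def genClosed (k : Type) [Field k] {n : ℕ} (G S : Set (Matrix (Fin n) (Fin n) k)) :
    Set (Matrix (Fin n) (Fin n) k) :=
  ⋂₀ {T | S ⊆ T ∧ T ⊆ G ∧ IsSubgroupSet k T ∧ relClosed (mzar k n) G T}

/-- A cocharacter of a linear algebraic group `G`: a regular homomorphism `k* → G`,
whose matrix entries are Laurent polynomials in the parameter. -/
structure Cochar (k : Type) [Field k] (G : LAG k) where
  toFun : k → Matrix (Fin G.n) (Fin G.n) k
  mem : ∀ a : k, a ≠ 0 → toFun a ∈ G.carrier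
  map_one : toFun 1 = 1
  map_mul : ∀ a b : k, a ≠ 0 → b ≠ 0 → toFun (a * b) = toFun a * toFun b
  regular : ∃ (p : Fin G.n → Fin G.n → Polynomial k) (N : ℕ),
    ∀ a : k, a ≠ 0 → ∀ i j, (p i j).eval a = a ^ N * toFun a i j

/-- `h` is the limit as `a → 0` of `λ(a) * g * λ(a)⁻¹`: the matrix entries of the conjugate
extend polynomially to `a = 0` with value `h`. -/
def HasLim (k : Type) [Field k] {G : LAG k} (l : Cochar k G)
    (g h : Matrix (Fin G.n) (Fin G.n) k) : Prop :=
  ∃ p : Fin G.n → Fin G.n → Polynomial k,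
    (∀ a : k, a ≠ 0 → ∀ i j, (p i j).eval a = (l.toFun a * g * (l.toFun a)⁻¹) i j) ∧
    (∀ i j, (p i j).eval 0 = h i j)

/-- The R-parabolic subgroup `P_λ = {g ∈ G | lim_{a→0} λ(a) g λ(a)⁻¹ exists in G}`. -/
def Rpar (k : Type) [Field k] {G : LAG k} (l : Cochar k G) :
    Set (Matrix (Fin G.n) (Fin G.n) k) :=
  {g | g ∈ G.carrier ∧ ∃ h ∈ G.carrier, HasLim k l g h}

/-- The unipotent radical `R_u(P_λ) = {g ∈ G | lim_{a→0} λ(a) g λ(a)⁻¹ = 1}`. -/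
def RparRu (k : Type) [Field k] {G : LAG k} (l : Cochar k G) :
    Set (Matrix (Fin G.n) (Fin G.n) k) :=
  {g | g ∈ G.carrier ∧ HasLim k l g 1}

/-- The R-Levi subgroup `L_λ = C_G(λ(k*))`. -/
def RLevi (k : Type) [Field k] {G : LAG k} (l : Cochar k G) :
    Set (Matrix (Fin G.n) (Fin G.n) k) :=
  {g | g ∈ G.carrier ∧ ∀ a : k, a ≠ 0 → l.toFun a * g = g * l.toFun a}

/-- The image `c_λ(M)` of a subset `M ⊆ P_λ` under the canonical projection to `L_λ`,
described via limits. -/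
def cLam (k : Type) [Field k] {G : LAG k} (l : Cochar k G)
    (M : Set (Matrix (Fin G.n) (Fin G.n) k)) : Set (Matrix (Fin G.n) (Fin G.n) k) :=
  {h | ∃ g ∈ M, HasLim k l g h}

/-- `H` is a `G`-completely reducible subgroup: every R-parabolic subgroup containing `H`
has an R-Levi subgroup containing `H`. -/
def IsGcr (k : Type) [Field k] (G : LAG k) (H : Set (Matrix (Fin G.n) (Fin G.n) k)) : Prop :=
  ∀ l : Cochar k G, H ⊆ Rpar k l →
    ∃ l' : Cochar k G, Rpar k l' = Rpar k l ∧ H ⊆ RLevi k l'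

/-- The orbit of a tuple under simultaneous conjugation by `G`. -/
def conjOrbit (k : Type) [Field k] (G : LAG k) {N : ℕ}
    (t : Fin N → Matrix (Fin G.n) (Fin G.n) k) :
    Set (Fin N → Matrix (Fin G.n) (Fin G.n) k) :=
  {s | ∃ g ∈ G.carrier, s = fun i => g * t i * g⁻¹}

/-- Two tuples have the same image in the character variety `G^N ⫽ G`: the closures of their
conjugation orbits intersect. -/
def piEq (k : Type) [Field k] (G : LAG k) {N : ℕ}
    (t s : Fin N → Matrix (Fin G.n) (Fin G.n) k) : Prop :=
  (@closure _ (mNzar k G.n N) (conjOrbit k G t) ∩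
    @closure _ (mNzar k G.n N) (conjOrbit k G s)).Nonempty

/-- `G·H ⪯ G·M` (unipotent-radical form): there are `s ∈ ℕ`, tuples `h ∈ H^s` and `m ∈ M^s`
such that the image of the closed subgroup generated by `h` in `H/R_u(H)` is all of
`H/R_u(H)` (equivalently `𝒢(h)·R_u(H) = H`) and `π_G(m) = π_G(h)`. -/
def preceq (k : Type) [Field k] (G : LAG k)
    (H M : Set (Matrix (Fin G.n) (Fin G.n) k)) : Prop :=
  ∃ (s : ℕ) (h m : Fin s → Matrix (Fin G.n) (Fin G.n) k),
    (∀ i, h i ∈ H) ∧ (∀ i, m i ∈ M) ∧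
    {x | ∃ a ∈ genClosed k G.carrier (Set.range h), ∃ b ∈ RuSet k H, x = a * b} = H ∧
    piEq k G m h

/-- `G·H ⪯ G·M` (generating-tuple form, for reductive `H`): there are `s ∈ ℕ`, a generating
tuple `h ∈ H^s` for `H` and `m ∈ M^s` with `π_G(m) = π_G(h)`. -/
def preceqGen (k : Type) [Field k] (G : LAG k)
    (H M : Set (Matrix (Fin G.n) (Fin G.n) k)) : Prop :=
  ∃ (s : ℕ) (h m : Fin s → Matrix (Fin G.n) (Fin G.n) k),
    (∀ i, h i ∈ H) ∧ (∀ i, m i ∈ M) ∧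
    genClosed k G.carrier (Set.range h) = H ∧
    piEq k G m h

/-- A solid field: characteristic zero, or positive characteristic and transcendental over
the prime field. -/
def Solid (k : Type) [Field k] : Prop :=
  CharZero k ∨ ((∃ p : ℕ, p.Prime ∧ (p : k) = 0) ∧ ∃ x : k, Transcendental ℤ x)

/-! ### Actions on quasi-projective varieties -/

/-- A regular (algebraic) action of a linear algebraic group `G` on a quasi-projective
variety `V ⊆ ℙ^(m-1)(k)`: the action map `G × V → V` is locally given by polynomials that
are homogeneous in the projective coordinates. -/
structure ActionP (k : Type) [Field k] (G : LAG k) (m : ℕ) (V : Set (Pt k m)) where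
  act : Matrix (Fin G.n) (Fin G.n) k → Pt k m → Pt k m
  maps : ∀ g ∈ G.carrier, ∀ v ∈ V, act g v ∈ V
  one_act : ∀ v ∈ V, act 1 v = v
  mul_act : ∀ g ∈ G.carrier, ∀ h ∈ G.carrier, ∀ v ∈ V, act (g * h) v = act g (act h v)
  regular : ∀ g ∈ G.carrier, ∀ v : {w : Fin m → k // w ≠ 0}, Projectivization.mk' k v ∈ V →
    ∃ (d : ℕ) (F : Fin m → MvPolynomial ((Fin G.n × Fin G.n) ⊕ Fin m) k)
      (U : Set (Matrix (Fin G.n) (Fin G.n) k × Pt k m)),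
      (∀ i, (F i).IsWeightedHomogeneous (Sum.elim (fun _ => 0) (fun _ => 1)) d) ∧
      @IsOpen _ (mpzar k G.n m) U ∧ (g, Projectivization.mk' k v) ∈ U ∧
      ∀ g' ∈ G.carrier, ∀ w : {w : Fin m → k // w ≠ 0}, Projectivization.mk' k w ∈ V →
        (g', Projectivization.mk' k w) ∈ U →
        ∃ hnz : (fun i => MvPolynomial.eval
            (Sum.elim (fun q : Fin G.n × Fin G.n => g' q.1 q.2) w.1) (F i)) ≠ 0,
          act g' (Projectivization.mk' k w) =
            Projectivization.mk k (fun i => MvPolynomial.eval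
              (Sum.elim (fun q : Fin G.n × Fin G.n => g' q.1 q.2) w.1) (F i)) hnz

/-- The stabiliser `G_v` of a point `v` under an action of `G`. -/
def stab (k : Type) [Field k] {G : LAG k} {m : ℕ} {V : Set (Pt k m)}
    (A : ActionP k G m V) (v : Pt k m) : Set (Matrix (Fin G.n) (Fin G.n) k) :=
  {g | g ∈ G.carrier ∧ A.act g v = v}

/-- `G` permutes the irreducible components of `V` transitively. -/
def TransComps (k : Type) [Field k] {G : LAG k} {m : ℕ} {V : Set (Pt k m)}
    (A : ActionP k G m V) : Prop :=
  ∀ D D', IsIrrCompOf (pzar k m) V D → IsIrrCompOf (pzar k m) V D' →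
    ∃ g ∈ G.carrier, A.act g '' D = D'

/-- The set of points of `V` whose stabiliser has minimal dimension. -/
def V0 (k : Type) [Field k] {G : LAG k} {m : ℕ} {V : Set (Pt k m)}
    (A : ActionP k G m V) : Set (Pt k m) :=
  {v | v ∈ V ∧ ∀ w ∈ V, sdim (mzar k G.n) (stab k A v) ≤ sdim (mzar k G.n) (stab k A w)}

/-- A regular morphism between quasi-projective varieties `X ⊆ ℙ^(a-1)` and `Y ⊆ ℙ^(b-1)`:
locally given by homogeneous polynomials of the same degree. -/
def RegMap (k : Type) [Field k] (a b : ℕ) (X : Set (Pt k a)) (Y : Set (Pt k b))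
    (f : Pt k a → Pt k b) : Prop :=
  (∀ x ∈ X, f x ∈ Y) ∧
  ∀ v : {w : Fin a → k // w ≠ 0}, Projectivization.mk' k v ∈ X →
    ∃ (d : ℕ) (F : Fin b → MvPolynomial (Fin a) k) (U : Set (Pt k a)),
      (∀ i, (F i).IsHomogeneous d) ∧ @IsOpen _ (pzar k a) U ∧ Projectivization.mk' k v ∈ U ∧
      ∀ w : {w : Fin a → k // w ≠ 0}, Projectivization.mk' k w ∈ X →
        Projectivization.mk' k w ∈ U →
        ∃ hnz : (fun i => MvPolynomial.eval w.1 (F i)) ≠ 0,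
          f (Projectivization.mk' k w) =
            Projectivization.mk k (fun i => MvPolynomial.eval w.1 (F i)) hnz

/-! ### Actions on affine varieties -/

/-- A regular action of a linear algebraic group `G` on an affine variety `V ⊆ k^m`:
given globally by polynomials in the matrix entries, the inverse determinant and the
coordinates. -/
structure ActionA (k : Type) [Field k] (G : LAG k) (m : ℕ) (V : Set (Fin m → k)) where
  act : Matrix (Fin G.n) (Fin G.n) k → (Fin m → k) → (Fin m → k)
  maps : ∀ g ∈ G.carrier, ∀ v ∈ V, act g v ∈ V
  one_act : ∀ v ∈ V, act 1 v = v
  mul_act : ∀ g ∈ G.carrier, ∀ h ∈ G.carrier, ∀ v ∈ V, act (g * h) v = act g (act h v)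
  regular : ∃ F : Fin m → MvPolynomial (((Fin G.n × Fin G.n) ⊕ Fin m) ⊕ Unit) k,
    ∀ g ∈ G.carrier, ∀ v ∈ V, act g v = fun i =>
      MvPolynomial.eval
        (Sum.elim (Sum.elim (fun q : Fin G.n × Fin G.n => g q.1 q.2) v)
          (fun _ => Ring.inverse g.det)) (F i)

/-- A regular map on a subset `X` of affine space: locally a ratio of polynomials. -/
def RegMapA (k : Type) [Field k] {a b : ℕ} (X : Set (Fin a → k))
    (f : (Fin a → k) → (Fin b → k)) : Prop :=
  ∀ x ∈ X, ∃ (p : Fin b → MvPolynomial (Fin a) k) (q : MvPolynomial (Fin a) k),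
    MvPolynomial.eval x q ≠ 0 ∧
    ∀ y ∈ X, MvPolynomial.eval y q ≠ 0 →
      ∀ i, MvPolynomial.eval y q * f y i = MvPolynomial.eval y (p i)

/-- A subset `X` of affine space is an affine variety: it is isomorphic, via mutually inverse
regular maps, to a Zariski-closed subset of some affine space. -/
def IsAffineSubvar (k : Type) [Field k] {a : ℕ} (X : Set (Fin a → k)) : Prop :=
  ∃ (b : ℕ) (C : Set (Fin b → k)) (f : (Fin a → k) → (Fin b → k))
    (g : (Fin b → k) → (Fin a → k)),
    @IsClosed _ (zar k (Fin b)) C ∧ RegMapA k X f ∧ RegMapA k C g ∧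
    (∀ x ∈ X, f x ∈ C) ∧ (∀ y ∈ C, g y ∈ X) ∧
    (∀ x ∈ X, g (f x) = x) ∧ (∀ y ∈ C, f (g y) = y)

/-! ### Constructible sets -/

/-- A subset of affine space `Ωᵗ` that is constructible and defined over the subfield `k`:
a finite union of sets, each cut out by the vanishing of a family of `k`-polynomials and the
non-vanishing of a `k`-polynomial. -/
def IsConstructibleOver (k Ω : Type) [Field k] [Field Ω] [Algebra k Ω] (t : ℕ)
    (S : Set (Fin t → Ω)) : Prop :=
  ∃ (n : ℕ) (A : Fin n → Set (MvPolynomial (Fin t) k)) (g : Fin n → MvPolynomial (Fin t) k),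
    S = ⋃ i, {x | (∀ f ∈ A i,
        MvPolynomial.eval x (MvPolynomial.map (algebraMap k Ω) f) = 0) ∧
      MvPolynomial.eval x (MvPolynomial.map (algebraMap k Ω) (g i)) ≠ 0}

end Paper

/-!
Let `k ⊆ Ω` be the countable field generated by the coefficients of finitely many polynomials
defining `X` (Hilbert's basis theorem) and of one polynomial `fᵢ` for each `i`, vanishing on
`Xᵢ` but not on `X`. Irreducibility makes the ideal of `k`-polynomials vanishing on `X` prime,
and since `Ω` has uncountable transcendence degree over `k`, this prime has a generic point
`x ∈ Ωᵗ`: a `k`-polynomial vanishes at `x` iff it vanishes on `X`. Then `x ∈ X`, so `x ∈ Xᵢ`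
for some `i`, and `fᵢ(x) = 0` forces `fᵢ` to vanish on all of `X`, a contradiction.
-/

open scoped Topology

section GenericPoint

variable {κ Ω : Type*} [Field κ] [Field Ω] [Algebra κ Ω] [Countable κ] [IsAlgClosed Ω]
  [Uncountable Ω]

theorem IsAlgClosed.nonempty_algHom_of_countable (K : Type*) [Field K] [Algebra κ K]
    [Countable K] : Nonempty (K →ₐ[κ] Ω) := by
  obtain ⟨s, hs⟩ := exists_isTranscendenceBasis κ K
  obtain ⟨B, hB⟩ := exists_isTranscendenceBasis κ Ω
  have : Infinite B := by
    have h := IsAlgClosed.cardinal_eq_cardinal_transcendence_basis_of_aleph0_lt _ hB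
      Cardinal.mk_le_aleph0 Cardinal.aleph0_lt_mk
    rw [Cardinal.infinite_iff, ← Cardinal.lift_le, ← h, Cardinal.lift_le]
    exact Cardinal.aleph0_lt_mk.le
  -- The countable basis `s` of `K` is sent injectively into the infinite basis `B` of `Ω`;
  -- this embeds `κ(s)`, over which `K` is algebraic, and `Ω` is algebraically closed.
  obtain ⟨f, hf⟩ := exists_injective_nat s
  have hw : AlgebraicIndependent κ (((↑) : B → Ω) ∘ Infinite.natEmbedding B ∘ f) :=
    hB.1.comp _ ((Infinite.natEmbedding B).injective.comp hf)
  let E := IntermediateField.adjoin κ (Set.range ((↑) : s → K))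
  let φ : E →ₐ[κ] Ω :=
    (IsFractionRing.liftAlgHom (algebraicIndependent_iff_injective_aeval.2 hw)).comp
      hs.1.reprField
  let := φ.toAlgebra
  have : IsScalarTower κ E Ω := .of_algebraMap_eq fun a => (φ.commutes a).symm
  have := hs.isAlgebraic_field
  exact ⟨(IsAlgClosed.lift : K →ₐ[E] Ω).restrictScalars κ⟩

theorem MvPolynomial.exists_ker_aeval_eq {σ : Type*} [Countable σ]
    (p : Ideal (MvPolynomial σ κ)) [p.IsPrime] :
    ∃ x : σ → Ω, RingHom.ker (aeval (R := κ) x) = p := by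
  let K := FractionRing (MvPolynomial σ κ ⧸ p)
  have : Countable (MvPolynomial σ κ) := by
    rw [← Cardinal.mk_le_aleph0_iff]
    exact cardinalMk_le_max_lift.trans (by simp [Cardinal.mk_le_aleph0])
  have : Countable (MvPolynomial σ κ ⧸ p) := Ideal.Quotient.mk_surjective.countable
  have : Countable K := by
    rw [← Cardinal.mk_le_aleph0_iff]
    exact (IsLocalization.cardinalMk_le (R := MvPolynomial σ κ ⧸ p) (nonZeroDivisors _)).trans
      Cardinal.mk_le_aleph0
  obtain ⟨ψ⟩ := IsAlgClosed.nonempty_algHom_of_countable (κ := κ) (Ω := Ω) K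
  let φ := (ψ.comp (IsScalarTower.toAlgHom κ _ K)).comp (Ideal.Quotient.mkₐ κ p)
  refine ⟨φ ∘ X, ?_⟩
  ext h
  rw [← aeval_unique, RingHom.mem_ker]
  simp [φ, Ideal.Quotient.eq_zero_iff_mem]

end GenericPoint

namespace Paper

section Zariski

variable {k K ι : Type} [Field k] [Field K] [Algebra k K]

theorem isOpen_setOf_aeval_ne_zero (f : MvPolynomial ι k) :
    IsOpen[zar K ι] {x | aeval x f ≠ 0} :=
  .basic _ ⟨map (algebraMap k K) f, by simp only [aeval_def, eval₂_eq_eval_map]⟩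

theorem exists_eval_ne_zero_subset_of_isOpen {U : Set (ι → k)} (hU : IsOpen[zar k ι] U)
    {y : ι → k} (hy : y ∈ U) : ∃ f : MvPolynomial ι k, eval y f ≠ 0 ∧ {x | eval x f ≠ 0} ⊆ U := by
  induction hU with
  | basic V hV => obtain ⟨f, rfl⟩ := hV; exact ⟨f, hy, le_rfl⟩
  | univ => exact ⟨1, by simp, by simp⟩
  | inter U V _ _ ihU ihV =>
    obtain ⟨f, hf, hfU⟩ := ihU hy.1
    obtain ⟨g, hg, hgV⟩ := ihV hy.2
    refine ⟨f * g, by simp [hf, hg], fun x hx => ?_⟩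
    obtain ⟨hfx, hgx⟩ : eval x f ≠ 0 ∧ eval x g ≠ 0 := by simpa using hx
    exact ⟨hfU hfx, hgV hgx⟩
  | sUnion S _ ih =>
    obtain ⟨V, hVS, hyV⟩ := hy
    obtain ⟨f, hf, hfV⟩ := ih V hVS hyV
    exact ⟨f, hf, hfV.trans (Set.subset_sUnion_of_mem hVS)⟩

theorem isClosed_setOf_forall_eval_eq_zero (A : Set (MvPolynomial ι k)) :
    IsClosed[zar k ι] {x | ∀ f ∈ A, eval x f = 0} := by
  let := zar k ι
  have : {x | ∀ f ∈ A, eval x f = 0}ᶜ = ⋃ f ∈ A, {x | aeval (R := k) x f ≠ 0} := by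
    ext; simp
  exact isOpen_compl_iff.1 (this ▸ isOpen_biUnion fun f _ => isOpen_setOf_aeval_ne_zero f)

theorem exists_mem_vanishingIdeal_notMem_of_relClosed {X Y : Set (ι → k)}
    (hY : relClosed (zar k ι) X Y) (hXY : ¬X ⊆ Y) :
    ∃ f, f ∈ vanishingIdeal k Y ∧ f ∉ vanishingIdeal k X := by
  obtain ⟨C, hC, rfl⟩ := hY
  obtain ⟨y, hyX, hyC⟩ := Set.not_subset.1 hXY
  obtain ⟨f, hfy, hfC⟩ :=
    exists_eval_ne_zero_subset_of_isOpen hC.isOpen_compl fun hyC' => hyC ⟨hyC', hyX⟩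
  refine ⟨f, fun x hx => ?_, fun hf => hfy (by simpa using hf y hyX)⟩
  by_contra hfx
  exact hfC (by simpa using hfx) hx.1

theorem isPrime_vanishingIdeal_of_isIrreducible {X : Set (ι → K)}
    (hX : @IsIrreducible _ (zar K ι) X) : (vanishingIdeal k X).IsPrime := by
  let := zar K ι
  refine ⟨fun htop => ?_, fun {a b} hab => ?_⟩
  · obtain ⟨x, hx⟩ := hX.nonempty
    simpa using (Ideal.eq_top_iff_one _).1 htop x hx
  · by_contra! h
    simp only [mem_vanishingIdeal_iff, not_forall] at h
    obtain ⟨⟨x, hx, ha⟩, ⟨y, hy, hb⟩⟩ := h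
    obtain ⟨w, hw, hwa, hwb⟩ := hX.2 _ _ (isOpen_setOf_aeval_ne_zero a)
      (isOpen_setOf_aeval_ne_zero b) ⟨x, hx, ha⟩ ⟨y, hy, hb⟩
    exact mul_ne_zero hwa hwb (by simpa using hab w hw)

theorem exists_subset_vanishingIdeal_of_isIrreducible {J : Type} [Finite J] {X : Set (ι → k)}
    (A : J → Set (MvPolynomial ι k)) (g : J → MvPolynomial ι k)
    (hXeq : X = ⋃ i, {x | (∀ f ∈ A i, eval x f = 0) ∧ eval x (g i) ≠ 0})
    (hX : @IsIrreducible _ (zar k ι) X) :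
    ∃ i, A i ⊆ vanishingIdeal k X ∧ g i ∉ vanishingIdeal k X := by
  let := zar k ι
  set S := fun i => {x | (∀ f ∈ A i, eval x f = 0) ∧ eval x (g i) ≠ 0}
  have hfin := Set.finite_range fun i => closure (S i)
  obtain ⟨_, hZ, hXZ⟩ := isIrreducible_iff_sUnion_isClosed.1 hX hfin.toFinset
    (by simp [isClosed_closure])
    (by rw [hXeq, Set.Finite.coe_toFinset, Set.sUnion_range]
        exact Set.iUnion_mono fun i => subset_closure)
  obtain ⟨i, rfl⟩ := hfin.mem_toFinset.1 hZ
  refine ⟨i, fun f hf x hx => ?_, fun hg => ?_⟩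
  · have hV : closure (S i) ⊆ {x | ∀ f ∈ A i, eval x f = 0} :=
      closure_minimal (fun _ hy => hy.1) (isClosed_setOf_forall_eval_eq_zero (A i))
    simpa using hV (hXZ hx) f hf
  · obtain ⟨z, hz⟩ := closure_nonempty_iff.1 (hX.nonempty.mono hXZ)
    exact hz.2 (by simpa using hg z (hXeq ▸ Set.mem_iUnion.2 ⟨i, hz⟩))

end Zariski

theorem exists_eval_eq_zero_iff_mem_vanishingIdeal {σ Ω : Type} [Countable σ] [Field Ω]
    [IsAlgClosed Ω] [Uncountable Ω] {X : Set (σ → Ω)} (hX : @IsIrreducible _ (zar Ω σ) X)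
    {F : Set (MvPolynomial σ Ω)} (hF : F.Countable) :
    ∃ x, ∀ f ∈ F, eval x f = 0 ↔ f ∈ vanishingIdeal Ω X := by
  let k := Subfield.closure (⋃ f ∈ F, (f.coeffs : Set Ω))
  have : Countable k := by
    rw [← Cardinal.mk_le_aleph0_iff]
    refine (Subfield.cardinalMk_closure_le_max _).trans (max_le ?_ le_rfl)
    exact Cardinal.mk_le_aleph0_iff.2 (hF.biUnion fun f _ => f.coeffs.countable_toSet).to_subtype
  have := isPrime_vanishingIdeal_of_isIrreducible (k := k) hX
  obtain ⟨x, hx⟩ := exists_ker_aeval_eq (Ω := Ω) (vanishingIdeal k X)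
  refine ⟨x, fun f hf => ?_⟩
  obtain ⟨f, rfl⟩ : f ∈ Set.range (map (algebraMap k Ω)) :=
    mem_range_map_iff_coeffs_subset.2 fun c hc =>
      ⟨⟨c, Subfield.subset_closure (Set.mem_biUnion hf hc)⟩, rfl⟩
  have hmap : ∀ y : σ → Ω, eval y (map (algebraMap k Ω) f) = aeval y f := fun y => by
    rw [aeval_def, eval₂_eq_eval_map]
  rw [hmap, ← RingHom.mem_ker, hx, mem_vanishingIdeal_iff, mem_vanishingIdeal_iff]
  simp [hmap]

end Paper

open Paper in
/-- Corollary 2.6: over an uncountable algebraically closed field, an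
irreducible constructible set covered by countably many relatively closed subsets is
contained in one of them. -/
theorem statement5 (Ω : Type) [Field Ω] [IsAlgClosed Ω] [Uncountable Ω] (t : ℕ)
    (X : Set (Fin t → Ω)) (hX : IsConstructibleOver Ω Ω t X)
    (hirr : @IsIrreducible _ (zar Ω (Fin t)) X)
    (I : Type) [Countable I] (Xi : I → Set (Fin t → Ω))
    (hXi : ∀ i, relClosed (zar Ω (Fin t)) X (Xi i))
    (hcov : X ⊆ ⋃ i, Xi i) :
    ∃ i, X ⊆ Xi i := by
  by_contra! hcon
  choose f hfXi hfX using fun i => exists_mem_vanishingIdeal_notMem_of_relClosed (hXi i) (hcon i)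
  obtain ⟨n, A, g, hXeq⟩ := hX
  simp only [Algebra.algebraMap_self, map_id] at hXeq
  obtain ⟨i₀, hAX, hgX⟩ := exists_subset_vanishingIdeal_of_isIrreducible A g hXeq hirr
  obtain ⟨B, hB⟩ := (IsNoetherian.noetherian (Ideal.span (A i₀)) : (Ideal.span (A i₀)).FG)
  obtain ⟨x, hx⟩ := exists_eval_eq_zero_iff_mem_vanishingIdeal hirr
    (((Set.countable_range f).union (Set.countable_singleton (g i₀))).union B.countable_toSet)
  have hxA : Ideal.span (A i₀) ≤ RingHom.ker (eval x) := by
    rw [← hB, Ideal.span_le]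
    intro b hb
    exact (hx b (Or.inr hb)).2 (Ideal.span_le.2 hAX (hB ▸ Ideal.subset_span hb))
  have hxX : x ∈ X := by
    rw [hXeq]
    exact Set.mem_iUnion.2 ⟨i₀, fun a ha => hxA (Ideal.subset_span ha),
      fun h => hgX ((hx _ (Or.inl (Or.inr rfl))).1 h)⟩
  obtain ⟨_, ⟨i, rfl⟩, hxi⟩ := hcov hxX
  exact hfX i ((hx (f i) (Or.inl (Or.inl ⟨i, rfl⟩))).1 (by simpa using hfXi i x hxi))
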